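/- The intersection of two suspicious intervals in a 1D crease pattern, if it is an interval containing at least two creases inside both, is itself suspicious. More precisely: if [P,Q] and [P',Q'] are suspicious intervals with P ≤ P' ≤ Q ≤ Q' (overlapping but neither containing the other), then [P',Q] is suspicious. -/

import Mathlib

open Finset

/-- A 1D crease pattern: paper `[0, L]` with creases `c 0 < c 1 < ⋯ < c (n-1)`
strictly inside the paper. -/
structure CreasePattern1D where
  L : ℝ
  n : ℕ
  c : Fin n → ℝ
  mono : StrictMono c
  pos : ∀ i, 0 < c i
  lt_len : ∀ i, c i < L

namespace CreasePattern1D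

variable (P : CreasePattern1D)

/-- The folded-state map: `f x = x` on the first segment, and the slope flips
sign at every crease (alternating reflection). -/
noncomputable def foldMap (x : ℝ) : ℝ :=
  (-1 : ℝ) ^ ((univ.filter fun i => P.c i ≤ x)).card * x
    + 2 * ∑ i ∈ univ.filter (fun i => P.c i ≤ x), (-1 : ℝ) ^ (i : ℕ) * P.c i

/-- Vertex `j` of the pattern: `pt 0 = 0` (left end), `pt (j) = c (j-1)` for
`1 ≤ j ≤ n`, and `pt j = L` (right end) for `j ≥ n+1`. -/
noncomputable def pt (j : ℕ) : ℝ :=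
  if j = 0 then 0 else if h : j - 1 < P.n then P.c ⟨j - 1, h⟩ else P.L

/-- The interval between creases `p ≤ q` is *suspicious* if the folded images of
the far endpoints of its two flaps both lie strictly outside the folded image of
the interval. -/
def Suspicious (p q : Fin P.n) : Prop :=
  p ≤ q ∧
  P.foldMap (P.pt (p : ℕ)) ∉ P.foldMap '' Set.Icc (P.c p) (P.c q) ∧
  P.foldMap (P.pt ((q : ℕ) + 2)) ∉ P.foldMap '' Set.Icc (P.c p) (P.c q)

/-- Number of mountain creases in the closed interval `[c p, c q]`
(`a i = true` means crease `i` is a mountain). -/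
def countM (a : Fin P.n → Bool) (p q : Fin P.n) : ℕ :=
  ((univ : Finset (Fin P.n)).filter fun i => p ≤ i ∧ i ≤ q ∧ a i = true).card

/-- Number of valley creases in the closed interval `[c p, c q]`. -/
def countV (a : Fin P.n → Bool) (p q : Fin P.n) : ℕ :=
  ((univ : Finset (Fin P.n)).filter fun i => p ≤ i ∧ i ≤ q ∧ a i = false).card

/-- An interval is *innocent* if its mountain and valley counts differ by at
most one. -/
def Innocent (a : Fin P.n → Bool) (p q : Fin P.n) : Prop :=
  (P.countM a p q : ℤ) - P.countV a p q ≤ 1 ∧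
  (P.countV a p q : ℤ) - P.countM a p q ≤ 1

/-- Every suspicious interval is innocent. -/
def AllInnocent (a : Fin P.n → Bool) : Prop :=
  ∀ p q : Fin P.n, P.Suspicious p q → P.Innocent a p q

end CreasePattern1D

/-- The intersection of two overlapping suspicious intervals
is suspicious: if `[c p, c q]` and `[c p', c q']` are suspicious with
`p ≤ p' ≤ q ≤ q'`, then `[c p', c q]` is suspicious. -/
theorem suspicious_inter_suspicious (P : CreasePattern1D)
    (p q p' q' : Fin P.n)
    (h1 : P.Suspicious p q) (h2 : P.Suspicious p' q')
    (hpp : p ≤ p') (hpq : p' ≤ q) (hqq : q ≤ q') :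
    P.Suspicious p' q := by
  obtain ⟨_, h1a, h1b⟩ := h1
  obtain ⟨_, h2a, h2b⟩ := h2
  refine ⟨hpq, ?_, ?_⟩
  · intro hmem
    exact h2a (Set.image_mono (Set.Icc_subset_Icc le_rfl (P.mono.monotone hqq)) hmem)
  · intro hmem
    exact h1b (Set.image_mono (Set.Icc_subset_Icc (P.mono.monotone hpp) le_rfl) hmem)
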